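/- arXiv:1812.05146 — 5 statements merged into one kernel-verified Lean document; each statement's English description precedes it below -/
import Mathlib

section
/- (Urysohn's Lemma for σ-spaces) Let (X, Σ) be a σ-normal σ-topological space and let A and B be disjoint σ-closed subsets of X. Then there exists a σ-continuous function f : X → ℝ with 0 ≤ f(x) ≤ 1 for all x ∈ X, f(x) = 0 for every x ∈ A, and f(x) = 1 for every x ∈ B. -/
/-- A σ-topology on a set `X`: contains `∅` and `univ`, closed under finite
intersections and countable unions. -/
structure SigmaTopology (X : Type*) where
  IsOpen : Set X → Prop
  isOpen_empty : IsOpen ∅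
  isOpen_univ : IsOpen Set.univ
  isOpen_inter : ∀ s t : Set X, IsOpen s → IsOpen t → IsOpen (s ∩ t)
  isOpen_iUnion : ∀ f : ℕ → Set X, (∀ n, IsOpen (f n)) → IsOpen (⋃ n, f n)

namespace SigmaTopology

variable {X : Type*}

/-- A set is σ-closed if its complement is σ-open. -/
def IsClosed (T : SigmaTopology X) (s : Set X) : Prop := T.IsOpen sᶜ

/-- The σ-space is Hausdorff if distinct points have disjoint σ-open neighborhoods. -/
def Hausdorff (T : SigmaTopology X) : Prop :=
  ∀ x y : X, x ≠ y → ∃ U V : Set X, T.IsOpen U ∧ T.IsOpen V ∧ x ∈ U ∧ y ∈ V ∧ U ∩ V = ∅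

/-- `K` is countably compact: every countable cover of `K` by σ-open sets has a
finite subcover. -/
def CountablyCompactOn (T : SigmaTopology X) (K : Set X) : Prop :=
  ∀ U : ℕ → Set X, (∀ n, T.IsOpen (U n)) → K ⊆ ⋃ n, U n → ∃ s : Finset ℕ, K ⊆ ⋃ n ∈ s, U n

/-- The space is countably compact. -/
def CountablyCompact (T : SigmaTopology X) : Prop := T.CountablyCompactOn Set.univ

/-- The space is Lindelöf: every cover by σ-open sets has a countable subcover. -/
def Lindelof (T : SigmaTopology X) : Prop :=
  ∀ 𝒰 : Set (Set X), (∀ U ∈ 𝒰, T.IsOpen U) → ⋃₀ 𝒰 = Set.univ →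
    ∃ 𝒱 ⊆ 𝒰, 𝒱.Countable ∧ ⋃₀ 𝒱 = Set.univ

/-- The space is σ-normal: disjoint σ-closed sets are separated by σ-open sets. -/
def Normal (T : SigmaTopology X) : Prop :=
  ∀ A B : Set X, T.IsClosed A → T.IsClosed B → A ∩ B = ∅ →
    ∃ U V : Set X, T.IsOpen U ∧ T.IsOpen V ∧ A ⊆ U ∧ B ⊆ V ∧ U ∩ V = ∅

/-- σ-continuity of a real-valued function: preimages of open subsets of `ℝ`
are σ-open. -/
def SigmaContinuous (T : SigmaTopology X) (f : X → ℝ) : Prop :=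
  ∀ U : Set ℝ, _root_.IsOpen U → T.IsOpen (f ⁻¹' U)

end SigmaTopology

/-- Convergence of a net to a point in a σ-topological space: the net is eventually in
every σ-open set containing the point. -/
def NetConvergesTo {X A : Type*} [Preorder A] (T : SigmaTopology X) (x : A → X) (l : X) :
    Prop :=
  ∀ U : Set X, T.IsOpen U → l ∈ U → ∃ a₀ : A, ∀ a : A, a₀ ≤ a → x a ∈ U

/-- A positive bounded linear functional on `C_σ(X)`, with bound constant `C`. -/
def IsPosBddLinFunctional {X : Type*} (T : SigmaTopology X) (I : (X → ℝ) → ℝ) (C : ℝ) :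
    Prop :=
  0 ≤ C ∧
  (∀ f g : X → ℝ, T.SigmaContinuous f → T.SigmaContinuous g → I (f + g) = I f + I g) ∧
  (∀ (c : ℝ) (f : X → ℝ), T.SigmaContinuous f → I (c • f) = c * I f) ∧
  (∀ f : X → ℝ, T.SigmaContinuous f → 0 ≤ f → 0 ≤ I f) ∧
  (∀ f : X → ℝ, T.SigmaContinuous f → |I f| ≤ C * ⨆ x, |f x|)

/-- `μ₀ K = inf { I f : f ∈ C_σ(X), f ≥ χ_K }`. -/
noncomputable def mu0 {X : Type*} (T : SigmaTopology X) (I : (X → ℝ) → ℝ) (K : Set X) : ℝ :=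
  sInf (I '' {f : X → ℝ | T.SigmaContinuous f ∧ ∀ x, K.indicator (fun _ => (1:ℝ)) x ≤ f x})


namespace SigmaUrysohn

variable {X : Type*}

lemma isOpen_iUnion_countable (T : SigmaTopology X) {ι : Type} [Countable ι]
    (s : ι → Set X) (h : ∀ i, T.IsOpen (s i)) : T.IsOpen (⋃ i, s i) := by
  cases isEmpty_or_nonempty ι with
  | inl hι => simpa [Set.iUnion_of_empty] using T.isOpen_empty
  | inr hι =>
    obtain ⟨g, hg⟩ := exists_surjective_nat ι
    rw [← hg.iUnion_comp s]
    exact T.isOpen_iUnion _ fun n => h _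

lemma sep (T : SigmaTopology X) (hnorm : T.Normal) {C U : Set X}
    (hC : T.IsClosed C) (hU : T.IsOpen U) (hCU : C ⊆ U) :
    ∃ v F : Set X, T.IsOpen v ∧ T.IsClosed F ∧ C ⊆ v ∧ v ⊆ F ∧ F ⊆ U := by
  have hUc : T.IsClosed Uᶜ := by
    show T.IsOpen Uᶜᶜ; rwa [compl_compl]
  have hdisj : C ∩ Uᶜ = ∅ := by
    ext x; simp only [Set.mem_inter_iff, Set.mem_compl_iff, Set.mem_empty_iff_false,
      iff_false, not_and, not_not]
    exact fun hx => hCU hx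
  obtain ⟨u, w, hu, hw, hCu, hUw, huw⟩ := hnorm C Uᶜ hC hUc hdisj
  refine ⟨u, wᶜ, hu, by simpa [SigmaTopology.IsClosed, compl_compl] using hw, hCu, ?_, ?_⟩
  · intro x hxu hxw
    have : x ∈ u ∩ w := ⟨hxu, hxw⟩
    simp [huw] at this
  · intro x hx
    by_contra hxU
    exact hx (hUw hxU)

lemma dyadic_btwn {r s : ℝ} (h0 : 0 ≤ r) (h : r < s) :
    ∃ n k : ℕ, r < (k : ℝ) / 2 ^ n ∧ (k : ℝ) / 2 ^ n < s := by
  obtain ⟨n, hn⟩ := exists_pow_lt_of_lt_one (sub_pos.2 h) (by norm_num : (1:ℝ)/2 < 1)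
  refine ⟨n, ⌊r * 2 ^ n⌋₊ + 1, ?_, ?_⟩
  · rw [lt_div_iff₀ (by positivity)]
    push_cast
    exact Nat.lt_floor_add_one _
  · rw [div_lt_iff₀ (by positivity)]
    push_cast
    have h1 : (⌊r * 2 ^ n⌋₊ : ℝ) ≤ r * 2 ^ n := Nat.floor_le (by positivity)
    have h2 : (1:ℝ)/2 ^ n < s - r := by
      calc (1:ℝ)/2^n = (1/2)^n := by rw [div_pow]; norm_num
      _ < s - r := hn
    have hp : (0:ℝ) < 2 ^ n := by positivity
    have h3 : (1:ℝ) < (s - r) * 2 ^ n := (div_lt_iff₀ hp).1 h2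
    nlinarith


structure Level (T : SigmaTopology X) (A B : Set X) (n : ℕ) where
  V : ℕ → Set X
  F : ℕ → Set X
  openV : ∀ k, T.IsOpen (V k)
  closedF : ∀ k, T.IsClosed (F k)
  sub : ∀ k, V k ⊆ F k
  adj : ∀ k, F k ⊆ V (k + 1)
  memA : A ⊆ V 0
  top : V (2 ^ n) = Bᶜ
  bigF : ∀ k, 2 ^ n ≤ k → F k = Set.univ
  bigV : ∀ k, 2 ^ n < k → V k = Set.univ

variable {T : SigmaTopology X} {A B : Set X}

noncomputable def L0 (hnorm : T.Normal) (hA : T.IsClosed A) (hB : T.IsClosed B)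
    (hAB : A ∩ B = ∅) : Level T A B 0 := by
  have hBc : T.IsOpen Bᶜ := hB
  have hsub : A ⊆ Bᶜ := by
    intro x hxA hxB
    have : x ∈ A ∩ B := ⟨hxA, hxB⟩
    simp [hAB] at this
  choose v F hv hF hAv hvF hFB using sep T hnorm hA hBc hsub
  exact
  { V := fun k => if k = 0 then v else if k = 1 then Bᶜ else Set.univ
    F := fun k => if k = 0 then F else Set.univ
    openV := fun k => by
      rcases Nat.lt_or_ge k 2 with h | h
      · interval_cases k <;> simpa using by first | exact hv | exact hBc
      · have h1 : ¬ k = 0 := by omega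
        have h2 : ¬ k = 1 := by omega
        simpa [h1, h2] using T.isOpen_univ
    closedF := fun k => by
      by_cases h : k = 0
      · simpa [h] using hF
      · have : T.IsClosed (Set.univ : Set X) := by
          show T.IsOpen (Set.univ : Set X)ᶜ
          simpa using T.isOpen_empty
        simpa [h] using this
    sub := fun k => by
      by_cases h : k = 0
      · simpa [h] using hvF
      · simp [h]
    adj := fun k => by
      match k with
      | 0 => simpa using hFB
      | (k+1) => simp
    memA := by simpa using hAv
    top := by norm_num
    bigF := fun k hk => by
      have : ¬ k = 0 := by omega
      simp [this]
    bigV := fun k hk => by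
      have h1 : ¬ k = 0 := by omega
      have h2 : ¬ k = 1 := by omega
      simp [h1, h2] }

noncomputable def Lstep (hnorm : T.Normal) {n : ℕ} (ℓ : Level T A B n) :
    Level T A B (n + 1) := by
  have hsep : ∀ k, ∃ v F : Set X, T.IsOpen v ∧ T.IsClosed F ∧ ℓ.F k ⊆ v ∧ v ⊆ F ∧
      F ⊆ ℓ.V (k + 1) := fun k => sep T hnorm (ℓ.closedF k) (ℓ.openV (k+1)) (ℓ.adj k)
  choose v f hv hf hFv hvf hfV using hsep
  exact
  { V := fun j => if j % 2 = 0 then ℓ.V (j / 2) else v (j / 2)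
    F := fun j => if j % 2 = 0 then ℓ.F (j / 2) else f (j / 2)
    openV := fun j => by
      by_cases h : j % 2 = 0 <;> simp [h, ℓ.openV, hv]
    closedF := fun j => by
      by_cases h : j % 2 = 0 <;> simp [h, ℓ.closedF, hf]
    sub := fun j => by
      by_cases h : j % 2 = 0 <;> simp [h, ℓ.sub, hvf]
    adj := fun j => by
      rcases Nat.even_or_odd j with ⟨k, hk⟩ | ⟨k, hk⟩
      · subst hk
        have e1 : (k + k) % 2 = 0 := by omega
        have e2 : ¬ (k + k + 1) % 2 = 0 := by omega
        have e3 : (k + k) / 2 = k := by omega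
        have e4 : (k + k + 1) / 2 = k := by omega
        simpa [e1, e2, e3, e4] using hFv k
      · subst hk
        have e1 : ¬ (2 * k + 1) % 2 = 0 := by omega
        have e2 : (2 * k + 1 + 1) % 2 = 0 := by omega
        have e3 : (2 * k + 1) / 2 = k := by omega
        have e4 : (2 * k + 1 + 1) / 2 = k + 1 := by omega
        simpa [e1, e2, e3, e4] using hfV k
    memA := by simpa using ℓ.memA
    top := by
      have e1 : 2 ^ (n + 1) % 2 = 0 := by
        simp [pow_succ, Nat.mul_mod_left, Nat.mul_comm]
      have e2 : 2 ^ (n + 1) / 2 = 2 ^ n := by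
        rw [pow_succ]; omega
      simpa [e1, e2] using ℓ.top
    bigF := fun j hj => by
      by_cases h : j % 2 = 0
      · have : 2 ^ n ≤ j / 2 := by rw [pow_succ] at hj; omega
        simp [h, ℓ.bigF _ this]
      · have h2 : 2 ^ n ≤ j / 2 := by rw [pow_succ] at hj; omega
        have : f (j / 2) = Set.univ := by
          apply Set.eq_univ_of_univ_subset
          calc Set.univ = ℓ.F (j / 2) := (ℓ.bigF _ h2).symm
          _ ⊆ v (j / 2) := hFv _
          _ ⊆ f (j / 2) := hvf _
        simp [h, this]
    bigV := fun j hj => by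
      by_cases h : j % 2 = 0
      · have : 2 ^ n < j / 2 := by rw [pow_succ] at hj; omega
        simp [h, ℓ.bigV _ this]
      · have h2 : 2 ^ n ≤ j / 2 := by rw [pow_succ] at hj; omega
        have : v (j / 2) = Set.univ := by
          apply Set.eq_univ_of_univ_subset
          calc Set.univ = ℓ.F (j / 2) := (ℓ.bigF _ h2).symm
          _ ⊆ v (j / 2) := hFv _
        simp [h, this] }

noncomputable def L (hnorm : T.Normal) (hA : T.IsClosed A) (hB : T.IsClosed B)
    (hAB : A ∩ B = ∅) : (n : ℕ) → Level T A B n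
  | 0 => L0 hnorm hA hB hAB
  | n + 1 => Lstep hnorm (L hnorm hA hB hAB n)
section
variable (hnorm : T.Normal) (hA : T.IsClosed A) (hB : T.IsClosed B) (hAB : A ∩ B = ∅)

noncomputable def Vv (n k : ℕ) : Set X := (L hnorm hA hB hAB n).V k
noncomputable def Ff (n k : ℕ) : Set X := (L hnorm hA hB hAB n).F k

variable {hnorm hA hB hAB}

lemma compatV (n k : ℕ) : Vv hnorm hA hB hAB (n + 1) (2 * k) = Vv hnorm hA hB hAB n k := by
  have e1 : (2 * k) % 2 = 0 := by omega
  have e2 : (2 * k) / 2 = k := by omega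
  simp [Vv, L, Lstep, e1, e2]

lemma compatF (n k : ℕ) : Ff hnorm hA hB hAB (n + 1) (2 * k) = Ff hnorm hA hB hAB n k := by
  have e1 : (2 * k) % 2 = 0 := by omega
  have e2 : (2 * k) / 2 = k := by omega
  simp [Ff, L, Lstep, e1, e2]

lemma liftV (n k p : ℕ) : Vv hnorm hA hB hAB (n + p) (k * 2 ^ p) = Vv hnorm hA hB hAB n k := by
  induction p with
  | zero => simp
  | succ p ih =>
    have e : k * 2 ^ (p + 1) = 2 * (k * 2 ^ p) := by ring
    rw [show n + (p + 1) = (n + p) + 1 from rfl, e, compatV, ih]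

lemma liftF (n k p : ℕ) : Ff hnorm hA hB hAB (n + p) (k * 2 ^ p) = Ff hnorm hA hB hAB n k := by
  induction p with
  | zero => simp
  | succ p ih =>
    have e : k * 2 ^ (p + 1) = 2 * (k * 2 ^ p) := by ring
    rw [show n + (p + 1) = (n + p) + 1 from rfl, e, compatF, ih]

lemma monoF {n j k : ℕ} (h : j ≤ k) : Ff hnorm hA hB hAB n j ⊆ Ff hnorm hA hB hAB n k := by
  induction k with
  | zero => rw [Nat.le_zero.1 h]
  | succ k ih =>
    rcases Nat.lt_or_ge j (k + 1) with h' | h'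
    · exact (ih (by omega)).trans (((L hnorm hA hB hAB n).adj k).trans
        ((L hnorm hA hB hAB n).sub (k+1)))
    · rw [show j = k + 1 by omega]

lemma chainVF {n j k : ℕ} (h : j ≤ k) : Vv hnorm hA hB hAB n j ⊆ Ff hnorm hA hB hAB n k :=
  ((L hnorm hA hB hAB n).sub j).trans (monoF h)

lemma chainFV {n j k : ℕ} (h : j < k) : Ff hnorm hA hB hAB n j ⊆ Vv hnorm hA hB hAB n k := by
  have := monoF (hnorm := hnorm) (hA := hA) (hB := hB) (hAB := hAB) (n := n)
    (show j ≤ k - 1 by omega)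
  exact this.trans (by
    have := (L hnorm hA hB hAB n).adj (k - 1)
    rwa [show k - 1 + 1 = k by omega] at this)

lemma crossVF {m j n k : ℕ} (h : j * 2 ^ n ≤ k * 2 ^ m) :
    Vv hnorm hA hB hAB m j ⊆ Ff hnorm hA hB hAB n k := by
  rw [← liftV m j n (hnorm := hnorm) (hA := hA) (hB := hB) (hAB := hAB),
    ← liftF n k m (hnorm := hnorm) (hA := hA) (hB := hB) (hAB := hAB),
    show n + m = m + n from by omega]
  exact chainVF h

lemma crossFV {m j n k : ℕ} (h : j * 2 ^ n < k * 2 ^ m) :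
    Ff hnorm hA hB hAB m j ⊆ Vv hnorm hA hB hAB n k := by
  rw [← liftF m j n (hnorm := hnorm) (hA := hA) (hB := hB) (hAB := hAB),
    ← liftV n k m (hnorm := hnorm) (hA := hA) (hB := hB) (hAB := hAB),
    show n + m = m + n from by omega]
  exact chainFV h

end
section
variable (hnorm : T.Normal) (hA : T.IsClosed A) (hB : T.IsClosed B) (hAB : A ∩ B = ∅)

def Sx (x : X) : Set ℝ :=
  insert 1 {q | ∃ n k : ℕ, x ∈ Vv hnorm hA hB hAB n k ∧ q = (k : ℝ) / 2 ^ n}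

noncomputable def fx (x : X) : ℝ := sInf (Sx hnorm hA hB hAB x)

variable {hnorm hA hB hAB}

lemma Sx_nonempty (x : X) : (Sx hnorm hA hB hAB x).Nonempty := ⟨1, Set.mem_insert _ _⟩

lemma Sx_nonneg (x : X) : ∀ q ∈ Sx hnorm hA hB hAB x, (0:ℝ) ≤ q := by
  rintro q (rfl | ⟨n, k, _, rfl⟩)
  · norm_num
  · positivity

lemma Sx_bdd (x : X) : BddBelow (Sx hnorm hA hB hAB x) := ⟨0, Sx_nonneg x⟩

lemma fx_nonneg (x : X) : 0 ≤ fx hnorm hA hB hAB x :=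
  le_csInf (Sx_nonempty x) (Sx_nonneg x)

lemma fx_le_one (x : X) : fx hnorm hA hB hAB x ≤ 1 :=
  csInf_le (Sx_bdd x) (Set.mem_insert _ _)

lemma fx_le_of_mem {x : X} {n k : ℕ} (hx : x ∈ Vv hnorm hA hB hAB n k) :
    fx hnorm hA hB hAB x ≤ (k : ℝ) / 2 ^ n :=
  csInf_le (Sx_bdd x) (Set.mem_insert_of_mem _ ⟨n, k, hx, rfl⟩)

lemma fx_zero_of_memA {x : X} (hx : x ∈ A) : fx hnorm hA hB hAB x = 0 := by
  have h0 : x ∈ Vv hnorm hA hB hAB 0 0 := (L hnorm hA hB hAB 0).memA hx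
  have := fx_le_of_mem h0
  have h2 := fx_nonneg (hnorm := hnorm) (hA := hA) (hB := hB) (hAB := hAB) x
  simp only [Nat.cast_zero, pow_zero, zero_div] at this
  linarith

lemma fx_one_of_memB {x : X} (hx : x ∈ B) : fx hnorm hA hB hAB x = 1 := by
  have h1 : fx hnorm hA hB hAB x ≤ 1 := fx_le_one x
  have h2 : (1:ℝ) ≤ fx hnorm hA hB hAB x := by
    apply le_csInf (Sx_nonempty x)
    rintro q (rfl | ⟨n, k, hxk, rfl⟩)
    · exact le_refl 1
    · -- x ∈ B, x ∈ Vv n k forces k > 2^n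
      have hk : 2 ^ n < k := by
        by_contra hk
        push_neg at hk
        have hVB : Vv hnorm hA hB hAB n k ⊆ Bᶜ := by
          rcases Nat.lt_or_ge k (2 ^ n) with h | h
          · have : Vv hnorm hA hB hAB n k ⊆ Vv hnorm hA hB hAB n (2 ^ n) :=
              ((L hnorm hA hB hAB n).sub k).trans (chainFV h)
            rw [show Vv hnorm hA hB hAB n (2^n) = Bᶜ from (L hnorm hA hB hAB n).top] at this
            exact this
          · have hke : k = 2 ^ n := by omega
            rw [hke, show Vv hnorm hA hB hAB n (2^n) = Bᶜ from (L hnorm hA hB hAB n).top]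
        exact (hVB hxk) hx
      rw [le_div_iff₀ (by positivity : (0:ℝ) < 2 ^ n)]
      calc (1:ℝ) * 2 ^ n = 2 ^ n := one_mul _
      _ ≤ (k:ℝ) := by exact_mod_cast Nat.le_of_lt hk
  linarith

end
section
variable {hnorm : T.Normal} {hA : T.IsClosed A} {hB : T.IsClosed B} {hAB : A ∩ B = ∅}

lemma dyadic_le {m j n k : ℕ} :
    (j : ℝ) / 2 ^ m ≤ (k : ℝ) / 2 ^ n ↔ j * 2 ^ n ≤ k * 2 ^ m := by
  rw [div_le_div_iff₀ (by positivity) (by positivity)]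
  norm_cast

lemma dyadic_lt {m j n k : ℕ} :
    (j : ℝ) / 2 ^ m < (k : ℝ) / 2 ^ n ↔ j * 2 ^ n < k * 2 ^ m := by
  rw [div_lt_div_iff₀ (by positivity) (by positivity)]
  norm_cast

lemma openLt (a : ℝ) : T.IsOpen {x | fx hnorm hA hB hAB x < a} := by
  have heq : {x | fx hnorm hA hB hAB x < a} =
      ⋃ (p : ℕ × ℕ), ⋃ (_ : (p.2 : ℝ) / 2 ^ p.1 < a), Vv hnorm hA hB hAB p.1 p.2 := by
    ext x
    simp only [Set.mem_setOf_eq, Set.mem_iUnion]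
    constructor
    · intro hx
      obtain ⟨q, hq, hqa⟩ := exists_lt_of_csInf_lt (Sx_nonempty x) hx
      rcases hq with rfl | ⟨n, k, hxk, rfl⟩
      · obtain ⟨n, hn⟩ := exists_pow_lt_of_lt_one (sub_pos.2 hqa) (by norm_num : (1:ℝ)/2 < 1)
        refine ⟨(n, 2 ^ n + 1), ?_, ?_⟩
        · show ((2 ^ n + 1 : ℕ) : ℝ) / 2 ^ n < a
          push_cast
          rw [div_lt_iff₀ (by positivity)]
          have h12 : ((1:ℝ)/2) ^ n = 1 / 2 ^ n := by rw [div_pow]; norm_num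
          rw [h12] at hn
          have hp : (0:ℝ) < 2 ^ n := by positivity
          have : (1:ℝ) < (a - 1) * 2 ^ n := (div_lt_iff₀ hp).1 hn
          nlinarith
        · have : Vv hnorm hA hB hAB n (2 ^ n + 1) = Set.univ :=
            (L hnorm hA hB hAB n).bigV _ (by omega)
          rw [this]; trivial
      · exact ⟨(n, k), hqa, hxk⟩
    · rintro ⟨⟨n, k⟩, hk, hx⟩
      exact lt_of_le_of_lt (fx_le_of_mem hx) hk
  rw [heq]
  apply isOpen_iUnion_countable
  intro p
  by_cases h : (p.2 : ℝ) / 2 ^ p.1 < a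
  · classical
    rw [Set.iUnion_eq_if, if_pos h]; exact (L hnorm hA hB hAB p.1).openV p.2
  · classical
    rw [Set.iUnion_eq_if, if_neg h]; exact T.isOpen_empty

lemma openGt (a : ℝ) : T.IsOpen {x | a < fx hnorm hA hB hAB x} := by
  rcases lt_or_ge a 0 with ha | ha
  · have : {x | a < fx hnorm hA hB hAB x} = Set.univ := by
      apply Set.eq_univ_of_forall
      intro x
      exact lt_of_lt_of_le ha (fx_nonneg x)
    rw [this]; exact T.isOpen_univ
  · have heq : {x | a < fx hnorm hA hB hAB x} =
        ⋃ (p : ℕ × ℕ), ⋃ (_ : a < (p.2 : ℝ) / 2 ^ p.1), (Ff hnorm hA hB hAB p.1 p.2)ᶜ := by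
      ext x
      simp only [Set.mem_setOf_eq, Set.mem_iUnion]
      constructor
      · intro hx
        obtain ⟨n, k, hak, hkf⟩ := dyadic_btwn ha hx
        obtain ⟨m, j, hkj, hjf⟩ := dyadic_btwn (by positivity) hkf
        refine ⟨(n, k), hak, ?_⟩
        intro hmem
        have hcross : Ff hnorm hA hB hAB n k ⊆ Vv hnorm hA hB hAB m j :=
          crossFV (dyadic_lt.1 hkj)
        exact absurd (fx_le_of_mem (hcross hmem)) (not_le.2 hjf)
      · rintro ⟨⟨n, k⟩, hak, hx⟩
        refine lt_of_lt_of_le hak (le_csInf (Sx_nonempty x) ?_)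
        rintro q (rfl | ⟨m, j, hxj, rfl⟩)
        · -- k/2^n ≤ 1 since otherwise Ff n k = univ
          have hk : k ≤ 2 ^ n := by
            by_contra hk
            push_neg at hk
            have : Ff hnorm hA hB hAB n k = Set.univ :=
              (L hnorm hA hB hAB n).bigF _ (by omega)
            exact hx (this ▸ Set.mem_univ x)
          rw [div_le_one (by positivity : (0:ℝ) < 2 ^ n)]
          exact_mod_cast hk
        · by_contra hlt
          push_neg at hlt
          have hle : j * 2 ^ n ≤ k * 2 ^ m := dyadic_le.1 hlt.le
          exact hx (crossVF hle hxj)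
    rw [heq]
    apply isOpen_iUnion_countable
    intro p
    by_cases h : a < (p.2 : ℝ) / 2 ^ p.1
    · classical
      rw [Set.iUnion_eq_if, if_pos h]; exact (L hnorm hA hB hAB p.1).closedF p.2
    · classical
      rw [Set.iUnion_eq_if, if_neg h]; exact T.isOpen_empty

lemma fx_continuous : T.SigmaContinuous (fx hnorm hA hB hAB) := by
  intro U hU
  have heq : fx hnorm hA hB hAB ⁻¹' U =
      ⋃ (r : ℚ × ℚ), ⋃ (_ : Set.Ioo ((r.1 : ℝ)) ((r.2 : ℝ)) ⊆ U),
        fx hnorm hA hB hAB ⁻¹' Set.Ioo ((r.1 : ℝ)) ((r.2 : ℝ)) := by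
    ext x
    simp only [Set.mem_preimage, Set.mem_iUnion]
    constructor
    · intro hx
      obtain ⟨ε, hε, hball⟩ := Metric.isOpen_iff.1 hU _ hx
      rw [Real.ball_eq_Ioo] at hball
      obtain ⟨p, hp1, hp2⟩ := exists_rat_btwn
        (show fx hnorm hA hB hAB x - ε < fx hnorm hA hB hAB x by linarith)
      obtain ⟨q, hq1, hq2⟩ := exists_rat_btwn
        (show fx hnorm hA hB hAB x < fx hnorm hA hB hAB x + ε by linarith)
      refine ⟨(p, q), ?_, hp2, hq1⟩
      exact (Set.Ioo_subset_Ioo hp1.le hq2.le).trans hball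
    · rintro ⟨⟨p, q⟩, hsub, hmem⟩
      exact hsub hmem
  rw [heq]
  apply isOpen_iUnion_countable
  intro r
  by_cases h : Set.Ioo ((r.1 : ℝ)) ((r.2 : ℝ)) ⊆ U
  · classical
    rw [Set.iUnion_eq_if, if_pos h]
    have : fx hnorm hA hB hAB ⁻¹' Set.Ioo ((r.1 : ℝ)) ((r.2 : ℝ)) =
        {x | (r.1 : ℝ) < fx hnorm hA hB hAB x} ∩ {x | fx hnorm hA hB hAB x < (r.2 : ℝ)} := by
      ext x; simp [Set.mem_Ioo, and_comm]
    rw [this]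
    exact T.isOpen_inter _ _ (openGt _) (openLt _)
  · classical
    rw [Set.iUnion_eq_if, if_neg h]; exact T.isOpen_empty

end

end SigmaUrysohn

/-- Urysohn's Lemma for σ-spaces. -/
theorem sigma_urysohn {X : Type*} (T : SigmaTopology X) (hnorm : T.Normal)
    (A B : Set X) (hA : T.IsClosed A) (hB : T.IsClosed B) (hAB : A ∩ B = ∅) :
    ∃ f : X → ℝ, T.SigmaContinuous f ∧ (∀ x : X, 0 ≤ f x ∧ f x ≤ 1) ∧
      (∀ x ∈ A, f x = 0) ∧ (∀ x ∈ B, f x = 1) := by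
  refine ⟨SigmaUrysohn.fx hnorm hA hB hAB, SigmaUrysohn.fx_continuous,
    fun x => ⟨SigmaUrysohn.fx_nonneg x, SigmaUrysohn.fx_le_one x⟩,
    fun x hx => SigmaUrysohn.fx_zero_of_memA hx,
    fun x hx => SigmaUrysohn.fx_one_of_memB hx⟩
end

section
/- Let (X, Σ) be a σ-topological space that is countably compact, Hausdorff, and Lindelöf. Then X is σ-normal. -/
/-! Lindelöf plus countably compact means every open cover has a finite subcover, so
σ-closed sets are compact. As in ordinary topology, a compact set is then separated from any
set from which each of its points is separated, by taking finite unions of the neighbourhoods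
on one side and finite intersections on the other. Applied first to a closed set and a point
outside it (Hausdorff), then to two disjoint closed sets, this gives σ-normality. -/

namespace SigmaTopology

variable {X : Type*} (T : SigmaTopology X)

theorem isOpen_union {s t : Set X} (hs : T.IsOpen s) (ht : T.IsOpen t) :
    T.IsOpen (s ∪ t) := by
  have hst : s ∪ t = ⋃ n : ℕ, if n = 0 then s else t := by
    ext x
    simp only [Set.mem_union, Set.mem_iUnion]
    constructor
    · rintro (hx | hx)
      exacts [⟨0, by simpa using hx⟩, ⟨1, by simpa using hx⟩]
    · rintro ⟨n, hx⟩
      split_ifs at hx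
      exacts [Or.inl hx, Or.inr hx]
  rw [hst]
  exact T.isOpen_iUnion _ fun n => by split_ifs <;> assumption

def IsCompact (K : Set X) : Prop :=
  ∀ 𝒰 : Set (Set X), (∀ U ∈ 𝒰, T.IsOpen U) → K ⊆ ⋃₀ 𝒰 → ∃ 𝒱 ⊆ 𝒰, 𝒱.Finite ∧ K ⊆ ⋃₀ 𝒱

def SeparatedByOpens (A B : Set X) : Prop :=
  ∃ U V : Set X, T.IsOpen U ∧ T.IsOpen V ∧ A ⊆ U ∧ B ⊆ V ∧ Disjoint U V

variable {T}

theorem CountablyCompactOn.exists_finite_subcover {K : Set X} (hK : T.CountablyCompactOn K)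
    {𝒰 : Set (Set X)} (hopen : ∀ U ∈ 𝒰, T.IsOpen U) (hcount : 𝒰.Countable)
    (hcover : K ⊆ ⋃₀ 𝒰) : ∃ 𝒱 ⊆ 𝒰, 𝒱.Finite ∧ K ⊆ ⋃₀ 𝒱 := by
  rcases 𝒰.eq_empty_or_nonempty with rfl | hne
  · exact ⟨∅, subset_rfl, Set.finite_empty, hcover⟩
  obtain ⟨f, rfl⟩ := hcount.exists_eq_range hne
  obtain ⟨s, hs⟩ := hK f (fun n => hopen _ ⟨n, rfl⟩) (by rwa [Set.sUnion_range] at hcover)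
  refine ⟨f '' s, Set.image_subset_range f s, s.finite_toSet.image f, ?_⟩
  rwa [Set.sUnion_image]

theorem IsClosed.isCompact {K : Set X} (hK : T.IsClosed K) (hcc : T.CountablyCompact)
    (hl : T.Lindelof) : T.IsCompact K := by
  intro 𝒰 hopen hcover
  have hopen' : ∀ U ∈ insert Kᶜ 𝒰, T.IsOpen U := by
    rintro U (rfl | hU)
    exacts [hK, hopen U hU]
  have hcover' : ⋃₀ insert Kᶜ 𝒰 = Set.univ := by
    rw [Set.sUnion_insert, Set.eq_univ_iff_forall]
    intro x
    by_cases hx : x ∈ K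
    exacts [Or.inr (hcover hx), Or.inl hx]
  obtain ⟨𝒱, h𝒱, hcount, h𝒱cover⟩ := hl _ hopen' hcover'
  obtain ⟨𝒲, h𝒲, hfin, h𝒲cover⟩ := hcc.exists_finite_subcover
    (fun U hU => hopen' U (h𝒱 hU)) hcount h𝒱cover.ge
  refine ⟨𝒲 \ {Kᶜ}, fun U hU => ?_, hfin.sdiff, fun x hx => ?_⟩
  · exact (h𝒱 (h𝒲 hU.1)).resolve_left hU.2
  · obtain ⟨W, hW, hxW⟩ := h𝒲cover (Set.mem_univ x)
    exact ⟨W, ⟨hW, by rintro rfl; exact hxW hx⟩, hxW⟩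

namespace SeparatedByOpens

variable {A A' B : Set X}

theorem symm (h : T.SeparatedByOpens A B) : T.SeparatedByOpens B A :=
  let ⟨U, V, hU, hV, hAU, hBV, hUV⟩ := h
  ⟨V, U, hV, hU, hBV, hAU, hUV.symm⟩

theorem mono_left (h : T.SeparatedByOpens A B) (hA' : A' ⊆ A) : T.SeparatedByOpens A' B :=
  let ⟨U, V, hU, hV, hAU, hBV, hUV⟩ := h
  ⟨U, V, hU, hV, hA'.trans hAU, hBV, hUV⟩

theorem empty_left : T.SeparatedByOpens ∅ B :=
  ⟨∅, Set.univ, T.isOpen_empty, T.isOpen_univ, subset_rfl, Set.subset_univ B,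
    disjoint_bot_left⟩

theorem union_left (h : T.SeparatedByOpens A B) (h' : T.SeparatedByOpens A' B) :
    T.SeparatedByOpens (A ∪ A') B :=
  let ⟨U, V, hU, hV, hAU, hBV, hUV⟩ := h
  let ⟨U', V', hU', hV', hAU', hBV', hUV'⟩ := h'
  ⟨U ∪ U', V ∩ V', T.isOpen_union hU hU', T.isOpen_inter V V' hV hV',
    Set.union_subset_union hAU hAU', Set.subset_inter hBV hBV',
    Disjoint.union_left (hUV.mono_right Set.inter_subset_left)
      (hUV'.mono_right Set.inter_subset_right)⟩

theorem sUnion_left {𝒜 : Set (Set X)} (hfin : 𝒜.Finite)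
    (h : ∀ A ∈ 𝒜, T.SeparatedByOpens A B) : T.SeparatedByOpens (⋃₀ 𝒜) B := by
  induction 𝒜, hfin using Set.Finite.induction_on with
  | empty => simpa using empty_left
  | insert _ _ ih =>
    rw [Set.sUnion_insert]
    exact (h _ (Set.mem_insert _ _)).union_left (ih fun A hA => h A (Set.mem_insert_of_mem _ hA))

end SeparatedByOpens

theorem IsCompact.separatedByOpens {K B : Set X} (hK : T.IsCompact K)
    (h : ∀ x ∈ K, T.SeparatedByOpens {x} B) : T.SeparatedByOpens K B := by
  obtain ⟨𝒱, h𝒱, hfin, hcover⟩ := hK {U | T.IsOpen U ∧ T.SeparatedByOpens U B}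
    (fun U hU => hU.1) fun x hx => by
      obtain ⟨U, V, hU, hV, hxU, hBV, hUV⟩ := h x hx
      exact ⟨U, ⟨hU, U, V, hU, hV, subset_rfl, hBV, hUV⟩, hxU rfl⟩
  exact (SeparatedByOpens.sUnion_left hfin fun U hU => (h𝒱 hU).2).mono_left hcover

theorem Hausdorff.separatedByOpens_singleton (hh : T.Hausdorff) {x y : X} (hxy : x ≠ y) :
    T.SeparatedByOpens {x} {y} :=
  let ⟨U, V, hU, hV, hxU, hyV, hUV⟩ := hh x y hxy
  ⟨U, V, hU, hV, Set.singleton_subset_iff.mpr hxU, Set.singleton_subset_iff.mpr hyV,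
    Set.disjoint_iff_inter_eq_empty.mpr hUV⟩

end SigmaTopology

/-- A countably compact, Hausdorff, Lindelöf σ-space is σ-normal. -/
theorem countablyCompact_lindelof_hausdorff_normal {X : Type*} (T : SigmaTopology X)
    (hcc : T.CountablyCompact) (hh : T.Hausdorff) (hl : T.Lindelof) :
    T.Normal := by
  intro A B hA hB hAB
  have hpoint : ∀ x ∈ A, T.SeparatedByOpens {x} B := fun x hx =>
    ((hB.isCompact hcc hl).separatedByOpens fun y hy =>
      hh.separatedByOpens_singleton (ne_of_mem_of_not_mem hy
        fun hxB => (Set.eq_empty_iff_forall_notMem.mp hAB x) ⟨hx, hxB⟩)).symm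
  obtain ⟨U, V, hU, hV, hAU, hBV, hUV⟩ := (hA.isCompact hcc hl).separatedByOpens hpoint
  exact ⟨U, V, hU, hV, hAU, hBV, Set.disjoint_iff_inter_eq_empty.mp hUV⟩
end

section
/- Let (X, Σ) be a countably compact, Lindelöf, Hausdorff σ-topological space, I a positive bounded linear functional on C_σ(X), and μ₀ defined on σ-closed sets by μ₀(K) := inf{I(f) : f ∈ C_σ(X), f ≥ χ_K}. Then for every σ-closed set K and every ε > 0 there exists a σ-open set U with K ⊆ U such that μ₀(L) ≤ μ₀(K) + ε for every σ-closed set L with L ⊆ U. -/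
/-- (2): outer approximation property of `μ₀` on σ-closed sets. -/
theorem mu0_outer_approx {X : Type*} (T : SigmaTopology X)
    (hcc : T.CountablyCompact) (hl : T.Lindelof) (hh : T.Hausdorff)
    (I : (X → ℝ) → ℝ) (C : ℝ) (hI : IsPosBddLinFunctional T I C)
    (K : Set X) (hK : T.IsClosed K) (ε : ℝ) (hε : 0 < ε) :
    ∃ U : Set X, T.IsOpen U ∧ K ⊆ U ∧
      ∀ L : Set X, T.IsClosed L → L ⊆ U → mu0 T I L ≤ mu0 T I K + ε := by
  classical
  obtain ⟨hC, hadd, hsmul, hpos, hbd⟩ := hI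
  -- constants are σ-continuous
  have hconst : ∀ c : ℝ, T.SigmaContinuous (fun _ : X => c) := by
    intro c V hV
    by_cases h : c ∈ V
    · have : (fun _ : X => c) ⁻¹' V = Set.univ := by ext x; simp [h]
      rw [this]; exact T.isOpen_univ
    · have : (fun _ : X => c) ⁻¹' V = ∅ := by ext x; simp [h]
      rw [this]; exact T.isOpen_empty
  -- generic facts about the defining sets of mu0
  have memS : ∀ (A : Set X) (f : X → ℝ), T.SigmaContinuous f →
      (∀ x, A.indicator (fun _ => (1:ℝ)) x ≤ f x) →
      I f ∈ I '' {f : X → ℝ | T.SigmaContinuous f ∧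
        ∀ x, A.indicator (fun _ => (1:ℝ)) x ≤ f x} := by
    intro A f hf hfA
    exact ⟨f, ⟨hf, hfA⟩, rfl⟩
  have hge1 : ∀ A : Set X, ∀ x, A.indicator (fun _ => (1:ℝ)) x ≤ 1 := by
    intro A x
    by_cases hx : x ∈ A <;> simp [Set.indicator, hx]
  have hnn : ∀ A : Set X, ∀ a ∈ I '' {f : X → ℝ | T.SigmaContinuous f ∧
      ∀ x, A.indicator (fun _ => (1:ℝ)) x ≤ f x}, 0 ≤ a := by
    rintro A a ⟨f, ⟨hf, hfA⟩, rfl⟩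
    apply hpos f hf
    intro x
    show (0:ℝ) ≤ f x
    have h := hfA x
    by_cases hx : x ∈ A <;> simp [Set.indicator, hx] at h <;> linarith
  have hbdd : ∀ A : Set X, BddBelow (I '' {f : X → ℝ | T.SigmaContinuous f ∧
      ∀ x, A.indicator (fun _ => (1:ℝ)) x ≤ f x}) := fun A => ⟨0, fun a ha => hnn A a ha⟩
  have hSne : (I '' {f : X → ℝ | T.SigmaContinuous f ∧
      ∀ x, K.indicator (fun _ => (1:ℝ)) x ≤ f x}).Nonempty :=
    ⟨_, memS K (fun _ => 1) (hconst 1) (hge1 K)⟩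
  have hmu_nn : 0 ≤ mu0 T I K := le_csInf hSne (hnn K)
  -- mu0 K ≤ C
  have hIone : I (fun _ : X => (1:ℝ)) ≤ C := by
    have h := hbd _ (hconst 1)
    rcases isEmpty_or_nonempty X with hX | hX
    · have h0 : (⨆ x : X, |(fun _ : X => (1:ℝ)) x|) = 0 := by
        exact Real.iSup_of_isEmpty _
      rw [h0, mul_zero] at h
      calc I (fun _ : X => (1:ℝ)) ≤ |I (fun _ : X => (1:ℝ))| := le_abs_self _
        _ ≤ 0 := h
        _ ≤ C := hC
    · have h1 : (⨆ x : X, |(fun _ : X => (1:ℝ)) x|) = 1 := by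
        simp
      rw [h1, mul_one] at h
      exact le_trans (le_abs_self _) h
  have hmuC : mu0 T I K ≤ C :=
    le_trans (csInf_le (hbdd K) (memS K (fun _ => 1) (hconst 1) (hge1 K))) hIone
  -- pick f with I f < mu0 K + ε/2
  obtain ⟨a, haS, halt⟩ := Real.lt_sInf_add_pos hSne (half_pos hε)
  obtain ⟨f, ⟨hf, hfK⟩, rfl⟩ := haS
  -- f ≥ 0 pointwise
  have hf0 : ∀ x, 0 ≤ f x := by
    intro x
    have h := hfK x
    by_cases hx : x ∈ K <;> simp [Set.indicator, hx] at h <;> linarith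
  -- choose δ
  set δ : ℝ := ε / (2 * (C + ε)) with hδdef
  have hCε : 0 < C + ε := by linarith
  have hδpos : 0 < δ := div_pos hε (by linarith)
  have hδhalf : δ ≤ 1/2 := by
    rw [hδdef, div_le_iff₀ (by linarith)]
    nlinarith
  have h1δ : 0 < 1 - δ := by linarith
  set U : Set X := f ⁻¹' Set.Ioi (1 - δ) with hUdef
  refine ⟨U, hf _ isOpen_Ioi, ?_, ?_⟩
  · intro x hx
    have h := hfK x
    simp [Set.indicator, hx] at h
    simp [hUdef, Set.mem_preimage, Set.mem_Ioi]
    linarith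
  · intro L hL hLU
    set c : ℝ := (1 - δ)⁻¹ with hcdef
    have hcpos : 0 < c := inv_pos.mpr h1δ
    have hg : T.SigmaContinuous (c • f) := by
      intro V hV
      have : (c • f) ⁻¹' V = f ⁻¹' ((fun y => c * y) ⁻¹' V) := by
        ext x; simp [Pi.smul_apply, smul_eq_mul]
      rw [this]
      exact hf _ (hV.preimage (continuous_mul_left c))
    have hgL : ∀ x, L.indicator (fun _ => (1:ℝ)) x ≤ (c • f) x := by
      intro x
      by_cases hx : x ∈ L
      · have hxU : x ∈ U := hLU hx
        have hfx : 1 - δ < f x := hxU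
        simp only [Set.indicator_of_mem hx, Pi.smul_apply, smul_eq_mul]
        rw [hcdef, ← div_eq_inv_mul, le_div_iff₀ h1δ]
        linarith
      · simp only [Set.indicator_of_notMem hx, Pi.smul_apply, smul_eq_mul]
        exact mul_nonneg (le_of_lt hcpos) (hf0 x)
    have hmuL : mu0 T I L ≤ I (c • f) := csInf_le (hbdd L) (memS L _ hg hgL)
    rw [hsmul c f hf] at hmuL
    have hIf : I f < mu0 T I K + ε/2 := halt
    have hIf0 : 0 ≤ I f := hpos f hf hf0
    -- arithmetic: c * I f ≤ mu0 K + ε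
    have key : c * I f ≤ mu0 T I K + ε := by
      rw [hcdef, ← div_eq_inv_mul, div_le_iff₀ h1δ]
      have hδmul : δ * (mu0 T I K + ε) ≤ ε/2 := by
        have : δ * (mu0 T I K + ε) ≤ δ * (C + ε) := by
          apply mul_le_mul_of_nonneg_left (by linarith) (le_of_lt hδpos)
        have hδCε : δ * (C + ε) = ε/2 := by
          rw [hδdef]; field_simp
        linarith
      nlinarith
    linarith
end

section
/- Let (X, Σ) be a countably compact σ-topological space. Then every σ-continuous function f : X → ℝ is bounded, i.e., there is M ≥ 0 such that |f(x)| ≤ M for all x ∈ X. -/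
/-- σ-continuous functions on a countably compact σ-space are bounded. -/
theorem sigmaContinuous_bounded {X : Type*} (T : SigmaTopology X)
    (hcc : T.CountablyCompact) (f : X → ℝ) (hf : T.SigmaContinuous f) :
    ∃ M : ℝ, 0 ≤ M ∧ ∀ x : X, |f x| ≤ M := by
  set U : ℕ → Set X := fun n => f ⁻¹' Set.Ioo (-(n : ℝ)) n with hU
  have hopen : ∀ n, T.IsOpen (U n) := fun n => hf _ isOpen_Ioo
  have hcov : Set.univ ⊆ ⋃ n, U n := by
    intro x _
    obtain ⟨n, hn⟩ := exists_nat_gt (|f x|)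
    exact Set.mem_iUnion.2 ⟨n, abs_lt.1 hn⟩
  obtain ⟨s, hs⟩ := hcc U hopen hcov
  rcases s.eq_empty_or_nonempty with rfl | hne
  · refine ⟨0, le_refl _, fun x => ?_⟩
    have := hs (Set.mem_univ x); simp at this
  · obtain ⟨m, hm, hmax⟩ := s.exists_max_image (fun n => n) hne
    refine ⟨m, Nat.cast_nonneg m, fun x => ?_⟩
    have := hs (Set.mem_univ x)
    simp only [Set.mem_iUnion] at this
    obtain ⟨n, hn, hx⟩ := this
    have hle : (n : ℝ) ≤ m := Nat.cast_le.2 (hmax n hn)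
    have : |f x| < n := abs_lt.2 ⟨hx.1, hx.2⟩
    linarith
end

section
/- Let L be a first-order language and let G be a group that is also an L-structure. Let X be a compact topological space with a basis ℬ, and let ρ be the σ-topology on X generated by ℬ (so every ρ-set is open in X). Suppose G acts on X by an action · : G × X → X that is σ-continuous, i.e., for every U ∈ ρ the set {(g, x) ∈ G × X : g·x ∈ U} is a countable union ⋃_{i<ω} Φ_i × U_i with each Φ_i a definable subset of G and each U_i ∈ ρ. Let f : X → ℝ be σ-continuous with respect to ρ. Then for every ζ ∈ X, the function g ↦ f(g·ζ) from G to ℝ is logically right uniformly continuous. -/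
open FirstOrder

/-- A function `f : G → ℝ` on a group `G` that is an `L`-structure is
logically right uniformly continuous if for every `ε > 0` there is a countable
cover of `G` by definable sets `Θ n` (with parameters from `G`) such that whenever
`g₁, g₂` lie in the same `Θ n`, then `|f (g₁ * h) - f (g₂ * h)| < ε` for all `h`. -/
def LRUC {G : Type*} [Group G] (L : Language) [L.Structure G] (f : G → ℝ) : Prop :=
  ∀ ε : ℝ, 0 < ε → ∃ Θ : ℕ → Set G,
    (∀ n : ℕ, (Set.univ : Set G).Definable₁ L (Θ n)) ∧
    (⋃ n, Θ n) = Set.univ ∧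
    ∀ n : ℕ, ∀ g₁ ∈ Θ n, ∀ g₂ ∈ Θ n, ∀ h : G, |f (g₁ * h) - f (g₂ * h)| < ε

/-- The σ-topology generated by a family `B` of subsets of `X`. -/
inductive SigmaGen {X : Type*} (B : Set (Set X)) : Set X → Prop
  | basic : ∀ s ∈ B, SigmaGen B s
  | empty : SigmaGen B ∅
  | univ : SigmaGen B Set.univ
  | inter : ∀ s t : Set X, SigmaGen B s → SigmaGen B t → SigmaGen B (s ∩ t)
  | iUnion : ∀ f : ℕ → Set X, (∀ n, SigmaGen B (f n)) → SigmaGen B (⋃ n, f n)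

/-!
Cover `ℝ` by countably many open sets of diameter `< ε`. Pulling them back along `f` and then
along the action writes `G × X` as a countable union of rectangles `Φ × V`, with `Φ` definable
and `V` open, on each of which `f (g • x)` varies by less than `ε`. For fixed `g`, compactness of
`X` finds finitely many rectangles covering `{g} × X`; the intersection of their `Φ`s is a
definable set `Θ ∋ g`, and there are only countably many finite choices. Any two
`g₁, g₂ ∈ Θ` then share, for each `x`, a rectangle containing `(g₁, x)` and `(g₂, x)`; take
`x = h • ζ`.
-/

open Set Function

lemma SigmaGen.isOpen {X : Type*} [TopologicalSpace X] {B : Set (Set X)}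
    (hB : TopologicalSpace.IsTopologicalBasis B) {s : Set X} (h : SigmaGen B s) :
    IsOpen s := by
  induction h with
  | basic s hs => exact hB.isOpen hs
  | empty => exact isOpen_empty
  | univ => exact isOpen_univ
  | inter s t _ _ hs ht => exact hs.inter ht
  | iUnion f _ hf => exact isOpen_iUnion hf

namespace Set

variable {M : Type*} (L : Language) [L.Structure M] (A : Set M)

theorem definable₁_empty : A.Definable₁ L ∅ :=
  definable_empty

theorem definable₁_biInter_finset {ι : Type*} {s : ι → Set M}
    (hs : ∀ i, A.Definable₁ L (s i)) (F : Finset ι) : A.Definable₁ L (⋂ i ∈ F, s i) := by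
  change A.Definable L ((· 0) ⁻¹' ⋂ i ∈ F, s i)
  rw [preimage_iInter₂]
  exact definable_biInter_finset hs F

end Set

theorem Metric.exists_nat_isOpen_cover_dist_lt {α : Type*} [PseudoMetricSpace α]
    [TopologicalSpace.SeparableSpace α] [Nonempty α] {ε : ℝ} (hε : 0 < ε) :
    ∃ J : ℕ → Set α, (∀ n, IsOpen (J n)) ∧ (⋃ n, J n) = univ ∧
      ∀ n, ∀ a ∈ J n, ∀ b ∈ J n, dist a b < ε := by
  set u := TopologicalSpace.denseSeq α
  refine ⟨fun n => ball (u n) (ε / 2), fun n => isOpen_ball, ?_, fun n a ha b hb => ?_⟩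
  · refine eq_univ_of_forall fun x => mem_iUnion.2 ?_
    exact Metric.denseRange_iff.1 (TopologicalSpace.denseRange_denseSeq α) x _ (half_pos hε)
  · calc dist a b ≤ dist a (u n) + dist b (u n) := dist_triangle_right a b (u n)
      _ < ε / 2 + ε / 2 := add_lt_add ha hb
      _ = ε := add_halves ε

theorem exists_definable_cover_subset_of_compact {G X ι : Type*} [Nonempty G] (L : Language)
    [L.Structure G] (A : Set G) [TopologicalSpace X] [CompactSpace X] [Countable ι]
    (Φ : ι → Set G) (V : ι → Set X) (hΦ : ∀ i, A.Definable₁ L (Φ i)) (hV : ∀ i, IsOpen (V i))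
    (hcover : ∀ g x, ∃ i, g ∈ Φ i ∧ x ∈ V i) :
    ∃ Θ : ℕ → Set G, (∀ n, A.Definable₁ L (Θ n)) ∧ (⋃ n, Θ n) = univ ∧
      ∀ n x, ∃ i, Θ n ⊆ Φ i ∧ x ∈ V i := by
  classical
  have hfinite : ∀ g, ∃ F : Finset ι, g ∈ ⋂ i ∈ F, Φ i ∧ (⋃ i ∈ F, V i) = univ := by
    intro g
    obtain ⟨b, hb, hfin, hsub⟩ := isCompact_univ.elim_finite_subcover_image
      (b := {i | g ∈ Φ i}) (fun i _ => hV i)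
      (fun x _ => by simpa using hcover g x)
    refine ⟨hfin.toFinset, ?_, ?_⟩
    · simpa using fun i hi => hb hi
    · simpa [eq_univ_iff_forall] using hsub
  let Θ : Finset ι → Set G := fun F => if (⋃ i ∈ F, V i) = univ then ⋂ i ∈ F, Φ i else ∅
  obtain ⟨σ, hσ⟩ := exists_surjective_nat (Finset ι)
  refine ⟨fun n => Θ (σ n), fun n => ?_, ?_, fun n x => ?_⟩
  · by_cases hF : (⋃ i ∈ σ n, V i) = univ
    · simpa [Θ, hF] using definable₁_biInter_finset L A hΦ (σ n)
    · simpa [Θ, hF] using definable₁_empty L A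
  · refine eq_univ_of_forall fun g => ?_
    obtain ⟨F, hgF, hF⟩ := hfinite g
    obtain ⟨n, rfl⟩ := hσ F
    exact mem_iUnion.2 ⟨n, by simpa [Θ, hF] using hgF⟩
  · by_cases hF : (⋃ i ∈ σ n, V i) = univ
    · obtain ⟨i, hi, hx⟩ := mem_iUnion₂.1 (hF ▸ mem_univ x)
      exact ⟨i, by simpa [Θ, hF] using biInter_subset_of_mem hi, hx⟩
    · obtain ⟨i, -, hx⟩ := hcover (Classical.arbitrary G) x
      exact ⟨i, by simp [Θ, hF], hx⟩

theorem lruc_of_sigma_continuous_action_general {G : Type*} [Group G] (L : Language)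
    [L.Structure G] {X : Type*} [TopologicalSpace X] [CompactSpace X]
    (B : Set (Set X)) (hB : TopologicalSpace.IsTopologicalBasis B)
    (act : G → X → X)
    (hmul : ∀ (g h : G) (x : X), act (g * h) x = act g (act h x))
    (hcont : ∀ U : Set X, SigmaGen B U →
      ∃ (Φ : ℕ → Set G) (V : ℕ → Set X),
        (∀ i : ℕ, (Set.univ : Set G).Definable₁ L (Φ i)) ∧
        (∀ i : ℕ, SigmaGen B (V i)) ∧
        {p : G × X | act p.1 p.2 ∈ U} = ⋃ i : ℕ, Φ i ×ˢ V i)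
    (f : X → ℝ) (hf : ∀ U : Set ℝ, IsOpen U → SigmaGen B (f ⁻¹' U))
    (ζ : X) :
    LRUC L (fun g : G => f (act g ζ)) := by
  intro ε hε
  obtain ⟨J, hJ, hJcover, hJdist⟩ := Metric.exists_nat_isOpen_cover_dist_lt (α := ℝ) hε
  choose Φ V hΦ hV hact using fun k => hcont _ (hf _ (hJ k))
  have hmem : ∀ k g x, f (act g x) ∈ J k ↔ ∃ i, g ∈ Φ k i ∧ x ∈ V k i := fun k g x => by
    simpa using Set.ext_iff.1 (hact k) (g, x)
  have hcover : ∀ g x, ∃ p, g ∈ uncurry Φ p ∧ x ∈ uncurry V p := fun g x => by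
    obtain ⟨k, hk⟩ := mem_iUnion.1 (hJcover ▸ mem_univ (f (act g x)))
    obtain ⟨i, hi⟩ := (hmem k g x).1 hk
    exact ⟨(k, i), hi⟩
  obtain ⟨Θ, hΘ, hΘcover, hΘsub⟩ := exists_definable_cover_subset_of_compact L univ
    (uncurry Φ) (uncurry V) (fun p => hΦ p.1 p.2) (fun p => (hV p.1 p.2).isOpen hB) hcover
  refine ⟨Θ, hΘ, hΘcover, fun n g₁ hg₁ g₂ hg₂ h => ?_⟩
  obtain ⟨⟨k, i⟩, hsub, hx⟩ := hΘsub n (act h ζ)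
  have hJk : ∀ g ∈ Θ n, f (act (g * h) ζ) ∈ J k := fun g hg => by
    rw [hmul]
    exact (hmem k g _).2 ⟨i, hsub hg, hx⟩
  simpa only [← Real.dist_eq] using hJdist k _ (hJk g₁ hg₁) _ (hJk g₂ hg₂)

/-- If a group `G` acts σ-continuously on a compact space `X` and `f : X → ℝ` is
σ-continuous, then `g ↦ f (g • ζ)` is logically right uniformly continuous. -/
theorem lruc_of_sigma_continuous_action {G : Type*} [Group G] (L : Language)
    [L.Structure G] {X : Type*} [TopologicalSpace X] [CompactSpace X]
    (B : Set (Set X)) (hB : TopologicalSpace.IsTopologicalBasis B)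
    (act : G → X → X)
    (hone : ∀ x : X, act 1 x = x)
    (hmul : ∀ (g h : G) (x : X), act (g * h) x = act g (act h x))
    (hcont : ∀ U : Set X, SigmaGen B U →
      ∃ (Φ : ℕ → Set G) (V : ℕ → Set X),
        (∀ i : ℕ, (Set.univ : Set G).Definable₁ L (Φ i)) ∧
        (∀ i : ℕ, SigmaGen B (V i)) ∧
        {p : G × X | act p.1 p.2 ∈ U} = ⋃ i : ℕ, Φ i ×ˢ V i)
    (f : X → ℝ) (hf : ∀ U : Set ℝ, IsOpen U → SigmaGen B (f ⁻¹' U))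
    (ζ : X) :
    LRUC L (fun g : G => f (act g ζ)) :=
  lruc_of_sigma_continuous_action_general L B hB act hmul hcont f hf ζ
end
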